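/- The mean-squared error of the doubly robust mean estimator satisfies E[(θ* − θ̂_DR)²] ≤ 2·(((m+2n)/((m+n)·n))·Var[f̂(X_1) − Y_1] + (1/(m+n))·Var[Y_1]). -/

import Mathlib

/-!
With residuals `Rᵢ = f̂(Xᵢ) - Yᵢ`, the estimator equals `A + B` where
`A = ∑ wᵢ Rᵢ` with weights `wᵢ = 1/(m+n) - [i labelled]/n` summing to zero and
`B = (1/(m+n)) ∑ Yᵢ`. Hence it is unbiased and its mean squared error is `Var (A + B)`, which is
at most `2 (Var A + Var B)`. By pairwise independence and identical distribution,
`Var A = (∑ wᵢ²) Var R = (1/n - 1/(m+n)) Var R` and `Var B = Var Y / (m+n)`.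
-/

open MeasureTheory ProbabilityTheory Finset

section ResidualWeight

variable {ι : Type*} [Fintype ι] [DecidableEq ι]

/-- The doubly robust estimator built from the labelled indices `s` puts weight
`1 / |ι| - 1 / |s|` on the residual of a labelled sample and `1 / |ι|` on that of an unlabelled
one. -/
noncomputable def residualWeight (s : Finset ι) (i : ι) : ℝ :=
  1 / (Fintype.card ι : ℝ) - if i ∈ s then 1 / (#s : ℝ) else 0

lemma residualWeight_decomposition (s : Finset ι) (a b : ι → ℝ) :
    1 / (Fintype.card ι : ℝ) * ∑ i, a i - 1 / (#s : ℝ) * ∑ i ∈ s, (a i - b i)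
      = ∑ i, residualWeight s i * (a i - b i) + 1 / (Fintype.card ι : ℝ) * ∑ i, b i := by
  simp only [residualWeight, sub_mul, ite_mul, zero_mul, sum_sub_distrib, ← mul_sum,
    Finset.sum_ite_mem, univ_inter]
  ring

variable {s : Finset ι}

lemma sum_residualWeight (hs : s.Nonempty) : ∑ i, residualWeight s i = 0 := by
  have hN : (Fintype.card ι : ℝ) ≠ 0 :=
    Nat.cast_ne_zero.2 (hs.card_pos.trans_le s.card_le_univ).ne'
  simp only [residualWeight, sum_sub_distrib, sum_ite_mem_eq, sum_const, card_univ, nsmul_eq_mul]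
  field_simp
  ring

lemma sum_residualWeight_sq (hs : s.Nonempty) :
    ∑ i, residualWeight s i ^ 2 = 1 / #s - 1 / Fintype.card ι := by
  have hN : (Fintype.card ι : ℝ) ≠ 0 :=
    Nat.cast_ne_zero.2 (hs.card_pos.trans_le s.card_le_univ).ne'
  have hsq : ∀ i, residualWeight s i ^ 2 = 1 / (Fintype.card ι : ℝ) ^ 2
      - (if i ∈ s then 2 / (Fintype.card ι * #s : ℝ) else 0)
      + (if i ∈ s then 1 / (#s : ℝ) ^ 2 else 0) := by
    intro i
    unfold residualWeight
    split_ifs <;> field_simp <;> ring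
  simp only [hsq, sum_add_distrib, sum_sub_distrib, sum_ite_mem_eq, sum_const, card_univ,
    nsmul_eq_mul]
  field_simp
  ring

end ResidualWeight

lemma Fin.card_filter_le_val {N : ℕ} (m : ℕ) : #{i : Fin N | m ≤ (i : ℕ)} = N - m := by
  have h := card_filter_add_card_filter_not (s := (univ : Finset (Fin N)))
    (p := fun i => (i : ℕ) < m)
  simp only [card_univ, Fintype.card_fin, Fin.card_filter_val_lt, not_lt] at h
  omega

lemma variance_add_le_two_mul {Ω : Type*} [MeasurableSpace Ω] {μ : Measure Ω}
    [IsFiniteMeasure μ] {U V : Ω → ℝ} (hU : MemLp U 2 μ) (hV : MemLp V 2 μ) :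
    Var[U + V; μ] ≤ 2 * (Var[U; μ] + Var[V; μ]) := by
  have hsub := variance_nonneg (U - V) μ
  rw [variance_sub hU hV] at hsub
  rw [variance_add hU hV]
  linarith

section IdentDistrib

variable {Ω ι : Type*} [MeasurableSpace Ω] {μ : Measure Ω} [Fintype ι]

lemma integral_sum_const_mul_of_identDistrib {Z : ι → Ω → ℝ} {Z₀ : Ω → ℝ}
    (hZ : ∀ i, IdentDistrib (Z i) Z₀ μ μ) (h₀ : Integrable Z₀ μ) (c : ι → ℝ) :
    ∫ ω, ∑ i, c i * Z i ω ∂μ = (∑ i, c i) * ∫ ω, Z₀ ω ∂μ := by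
  rw [integral_finsetSum _ fun i _ => ((hZ i).integrable_iff.2 h₀).const_mul _, sum_mul]
  refine sum_congr rfl fun i _ => ?_
  rw [integral_const_mul, (hZ i).integral_eq]

lemma variance_sum_const_mul_of_identDistrib {Z : ι → Ω → ℝ} {Z₀ : Ω → ℝ}
    (hind : Pairwise fun i j => Z i ⟂ᵢ[μ] Z j) (hZ : ∀ i, IdentDistrib (Z i) Z₀ μ μ)
    (h₀ : MemLp Z₀ 2 μ) (c : ι → ℝ) :
    Var[fun ω => ∑ i, c i * Z i ω; μ] = (∑ i, c i ^ 2) * Var[Z₀; μ] := by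
  have hsum : (fun ω => ∑ i, c i * Z i ω) = ∑ i, c i • Z i := by
    ext ω; simp [Finset.sum_apply]
  rw [hsum, IndepFun.variance_sum (fun i _ => ((hZ i).memLp_iff.2 h₀).const_smul _)
    fun i _ j _ hij => (hind hij).comp (measurable_const_smul (c i)) (measurable_const_smul (c j)),
    sum_mul]
  refine sum_congr rfl fun i _ => ?_
  rw [variance_smul, (hZ i).variance_eq]

/-- The residuals `R i` and the responses `Y i` need not be independent of each other: the
factor `2` pays for their correlation. -/
theorem integral_sq_sub_residualWeight_sum_le [IsFiniteMeasure μ] [DecidableEq ι]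
    {s : Finset ι} (hs : s.Nonempty) {R Y : ι → Ω → ℝ} {R₀ Y₀ : Ω → ℝ}
    (hR_indep : Pairwise fun i j => R i ⟂ᵢ[μ] R j) (hR : ∀ i, IdentDistrib (R i) R₀ μ μ)
    (hR₀ : MemLp R₀ 2 μ)
    (hY_indep : Pairwise fun i j => Y i ⟂ᵢ[μ] Y j) (hY : ∀ i, IdentDistrib (Y i) Y₀ μ μ)
    (hY₀ : MemLp Y₀ 2 μ) :
    ∫ ω, (∫ ω', Y₀ ω' ∂μ
        - (∑ i, residualWeight s i * R i ω + 1 / (Fintype.card ι : ℝ) * ∑ i, Y i ω)) ^ 2 ∂μ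
      ≤ 2 * ((1 / #s - 1 / Fintype.card ι) * Var[R₀; μ] + 1 / Fintype.card ι * Var[Y₀; μ]) := by
  have hN : (Fintype.card ι : ℝ) ≠ 0 :=
    Nat.cast_ne_zero.2 (hs.card_pos.trans_le s.card_le_univ).ne'
  set c : ι → ℝ := fun _ => 1 / (Fintype.card ι : ℝ)
  have hc : ∑ i, c i = 1 := by simp [c, hN]
  set A : Ω → ℝ := fun ω => ∑ i, residualWeight s i * R i ω
  set B : Ω → ℝ := fun ω => ∑ i, c i * Y i ω
  have hA : MemLp A 2 μ := memLp_finsetSum _ fun i _ => ((hR i).memLp_iff.2 hR₀).const_mul _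
  have hB : MemLp B 2 μ := memLp_finsetSum _ fun i _ => ((hY i).memLp_iff.2 hY₀).const_mul _
  have hmean : ∫ ω, (A + B) ω ∂μ = ∫ ω, Y₀ ω ∂μ := by
    rw [integral_add' (hA.integrable one_le_two) (hB.integrable one_le_two),
      integral_sum_const_mul_of_identDistrib hR (hR₀.integrable one_le_two),
      integral_sum_const_mul_of_identDistrib hY (hY₀.integrable one_le_two),
      sum_residualWeight hs, hc]
    ring
  calc _ = Var[A + B; μ] := by
        rw [variance_eq_integral (hA.add hB).aemeasurable, hmean]
        refine integral_congr_ae (ae_of_all _ fun ω => ?_)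
        simp only [Pi.add_apply, A, B, c, mul_sum]
        exact sub_sq_comm _ _
    _ ≤ 2 * (Var[A; μ] + Var[B; μ]) := variance_add_le_two_mul hA hB
    _ = _ := by
        rw [variance_sum_const_mul_of_identDistrib hR_indep hR hR₀,
          variance_sum_const_mul_of_identDistrib hY_indep hY hY₀, sum_residualWeight_sq hs]
        simp only [c, sum_const, card_univ, nsmul_eq_mul]
        field_simp

end IdentDistrib

/-- The mean-squared error of the doubly robust mean estimator satisfies
`E[(θ* − θ̂_DR)²] ≤ 2·(((m+2n)/((m+n)·n))·Var[f̂(X_1) − Y_1] + (1/(m+n))·Var[Y_1])`. -/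
theorem doubly_robust_mean_estimator_mse_upper_residual
    {Ω : Type*} [MeasurableSpace Ω] (μ : Measure Ω) [IsProbabilityMeasure μ]
    {𝒳 : Type*} [MeasurableSpace 𝒳]
    (m n : ℕ) (hn : 0 < n)
    (X : Fin (m + n) → Ω → 𝒳) (Y : Fin (m + n) → Ω → ℝ)
    (h_indep : iIndepFun
      (fun i ω => (X i ω, Y i ω)) μ)
    (h_ident : ∀ i : Fin (m + n),
      IdentDistrib (fun ω => (X i ω, Y i ω))
        (fun ω => (X ⟨0, by omega⟩ ω, Y ⟨0, by omega⟩ ω)) μ μ)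
    (f : 𝒳 → ℝ) (hf : Measurable f)
    (hY2 : MemLp (Y ⟨0, by omega⟩) 2 μ)
    (hfX2 : MemLp (fun ω => f (X ⟨0, by omega⟩ ω)) 2 μ) :
    ∫ ω, ((∫ ω', Y ⟨0, by omega⟩ ω' ∂μ)
        - ((1 / (m + n : ℝ)) * (∑ i : Fin (m + n), f (X i ω))
          - (1 / (n : ℝ)) * ∑ i ∈ Finset.univ.filter (fun i : Fin (m + n) => m ≤ (i : ℕ)),
              (f (X i ω) - Y i ω))) ^ 2 ∂μ
      ≤ 2 * (((m + 2 * n : ℝ) / ((m + n : ℝ) * n)) *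
            (∫ ω, ((f (X ⟨0, by omega⟩ ω) - Y ⟨0, by omega⟩ ω)
              - ∫ ω', (f (X ⟨0, by omega⟩ ω') - Y ⟨0, by omega⟩ ω') ∂μ) ^ 2 ∂μ)
          + (1 / (m + n : ℝ)) *
            ∫ ω, (Y ⟨0, by omega⟩ ω - ∫ ω', Y ⟨0, by omega⟩ ω' ∂μ) ^ 2 ∂μ) := by
  set i₀ : Fin (m + n) := ⟨0, by omega⟩
  set s := Finset.univ.filter (fun i : Fin (m + n) => m ≤ (i : ℕ))
  have hs_card : #s = n := by rw [Fin.card_filter_le_val]; omega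
  have hs : s.Nonempty := card_pos.1 (by rw [hs_card]; exact hn)
  have hφ : Measurable fun p : 𝒳 × ℝ => f p.1 - p.2 :=
    (hf.comp measurable_fst).sub measurable_snd
  have hmse := integral_sq_sub_residualWeight_sum_le (μ := μ) hs
    (R := fun i ω => f (X i ω) - Y i ω) (R₀ := fun ω => f (X i₀ ω) - Y i₀ ω)
    (Y := Y) (Y₀ := Y i₀)
    (fun i j hij => (h_indep.indepFun hij).comp hφ hφ) (fun i => (h_ident i).comp hφ)
    (hfX2.sub hY2) (fun i j hij => (h_indep.indepFun hij).comp measurable_snd measurable_snd)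
    (fun i => (h_ident i).comp measurable_snd) hY2
  rw [hs_card, Fintype.card_fin, Nat.cast_add] at hmse
  have hest : ∀ ω, 1 / (m + n : ℝ) * ∑ i, f (X i ω) - 1 / (n : ℝ) * ∑ i ∈ s, (f (X i ω) - Y i ω)
      = ∑ i, residualWeight s i * (f (X i ω) - Y i ω) + 1 / (m + n : ℝ) * ∑ i, Y i ω := by
    intro ω
    simpa only [hs_card, Fintype.card_fin, Nat.cast_add] using
      residualWeight_decomposition s (fun i => f (X i ω)) (fun i => Y i ω)
  have hw : 1 / (n : ℝ) - 1 / (m + n : ℝ) ≤ (m + 2 * n : ℝ) / ((m + n : ℝ) * n) := by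
    field_simp
    linarith
  simp only [hest]
  calc _ ≤ 2 * ((1 / n - 1 / (m + n : ℝ)) * Var[fun ω => f (X i₀ ω) - Y i₀ ω; μ]
          + 1 / (m + n : ℝ) * Var[Y i₀; μ]) := hmse
    _ ≤ 2 * ((m + 2 * n : ℝ) / ((m + n : ℝ) * n) * Var[fun ω => f (X i₀ ω) - Y i₀ ω; μ]
          + 1 / (m + n : ℝ) * Var[Y i₀; μ]) := by
        gcongr 2 * (?_ * _ + _)
        exact variance_nonneg _ _
    _ = _ := by
        rw [variance_eq_integral (X := fun ω => f (X i₀ ω) - Y i₀ ω) (hfX2.sub hY2).aemeasurable,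
          variance_eq_integral hY2.aemeasurable]
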